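/- arXiv:2209.02926 — 9 statements merged into one kernel-verified Lean document; each statement's English description precedes it below -/
import Mathlib

section
/- Let k be a field with characteristic ≠ 2 and let A, B be 2×2 matrices over k. Suppose there are nonzero λ_A, λ_B ∈ k with A·A = λ_A²·I and B·B = λ_B²·I, that neither A nor B is a scalar multiple of the identity matrix, that A·B is not a scalar multiple of the identity matrix, and that A·B = c·(B·A) for some c ∈ k. Then (A·B)·(A·B) = −λ_A²·λ_B²·I (so c = −1 and the eigenvalues of AB are ±√(−1)·λ_A·λ_B). -/
/-!
By Cayley–Hamilton, `M * M = trace M • M - det M • 1` for a `2 × 2` matrix, so a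
non-scalar matrix with scalar square is traceless. For traceless `A` and `B`, polarizing
`M * M = -det M • 1` shows that `A * B + B * A` is scalar. Combined with `A * B = c • (B * A)`
this forces `c = -1` unless `A * B` is scalar, and then
`(A * B) * (A * B) = -(A * A) * (B * B)`.
-/

namespace Matrix

variable {R : Type*} [CommRing R]

theorem mul_self_fin_two (M : Matrix (Fin 2) (Fin 2) R) :
    M * M = M.trace • M - M.det • 1 := by
  nontriviality R
  have hCH := M.aeval_self_charpoly
  rw [charpoly_fin_two] at hCH
  simp only [map_add, map_sub, map_mul, Polynomial.aeval_X_pow, Polynomial.aeval_C,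
    Polynomial.aeval_X, Algebra.algebraMap_eq_smul_one, smul_mul_assoc, one_mul] at hCH
  rw [← sub_eq_zero, ← hCH, sq]
  abel

theorem mul_self_fin_two_of_trace_eq_zero {M : Matrix (Fin 2) (Fin 2) R} (hM : M.trace = 0) :
    M * M = -M.det • 1 := by
  rw [mul_self_fin_two, hM, zero_smul, zero_sub, neg_smul]

theorem mul_add_mul_fin_two_of_trace_eq_zero {A B : Matrix (Fin 2) (Fin 2) R}
    (hA : A.trace = 0) (hB : B.trace = 0) :
    A * B + B * A = (A.det + B.det - (A + B).det) • 1 := by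
  have hAB : (A + B).trace = 0 := by rw [trace_add, hA, hB, add_zero]
  calc A * B + B * A = (A + B) * (A + B) - A * A - B * B := by noncomm_ring
    _ = (A.det + B.det - (A + B).det) • 1 := by
      rw [mul_self_fin_two_of_trace_eq_zero hAB, mul_self_fin_two_of_trace_eq_zero hA,
        mul_self_fin_two_of_trace_eq_zero hB]
      module

theorem trace_eq_zero_of_mul_self_eq_smul_one {k : Type*} [Field k]
    {M : Matrix (Fin 2) (Fin 2) k} {l : k} (h : M * M = l • 1) (hM : ¬ ∃ c : k, M = c • 1) :
    M.trace = 0 := by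
  by_contra htr
  have hsmul : M.trace • M = (l + M.det) • 1 := by
    rw [add_smul, ← h, mul_self_fin_two, sub_add_cancel]
  exact hM ⟨M.trace⁻¹ * (l + M.det), by rw [mul_smul, ← hsmul, inv_smul_smul₀ htr]⟩

end Matrix

theorem mul_eq_neg_mul_of_mul_add_mul_eq_smul_one {k R : Type*} [DivisionRing k] [Ring R]
    [Module k R] {x y : R} {t c : k} (hsum : x * y + y * x = t • 1) (hc : x * y = c • (y * x))
    (hxy : ¬ ∃ s : k, x * y = s • 1) :
    y * x = -(x * y) := by
  by_cases hc1 : c + 1 = 0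
  · rw [hc, eq_neg_of_add_eq_zero_left hc1, neg_one_smul, neg_neg]
  · have hsmul : (c + 1) • (y * x) = t • 1 := by rw [add_smul, one_smul, ← hc, hsum]
    have hyx : y * x = ((c + 1)⁻¹ * t) • 1 := by rw [mul_smul, ← hsmul, inv_smul_smul₀ hc1]
    exact absurd ⟨c * ((c + 1)⁻¹ * t), by rw [hc, hyx, smul_smul]⟩ hxy

theorem long_automorphisms_product_square_general
    {k : Type*} [Field k]
    (A B : Matrix (Fin 2) (Fin 2) k) (lA lB : k)
    (hA : A * A = (lA ^ 2) • (1 : Matrix (Fin 2) (Fin 2) k))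
    (hB : B * B = (lB ^ 2) • (1 : Matrix (Fin 2) (Fin 2) k))
    (hAns : ¬ ∃ c : k, A = c • (1 : Matrix (Fin 2) (Fin 2) k))
    (hBns : ¬ ∃ c : k, B = c • (1 : Matrix (Fin 2) (Fin 2) k))
    (hABns : ¬ ∃ c : k, A * B = c • (1 : Matrix (Fin 2) (Fin 2) k))
    (hcomm : ∃ c : k, A * B = c • (B * A)) :
    (A * B) * (A * B) = (-(lA ^ 2 * lB ^ 2)) • (1 : Matrix (Fin 2) (Fin 2) k) := by
  obtain ⟨c, hc⟩ := hcomm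
  have hsum := Matrix.mul_add_mul_fin_two_of_trace_eq_zero
    (Matrix.trace_eq_zero_of_mul_self_eq_smul_one hA hAns)
    (Matrix.trace_eq_zero_of_mul_self_eq_smul_one hB hBns)
  have hanti : B * A = -(A * B) := mul_eq_neg_mul_of_mul_add_mul_eq_smul_one hsum hc hABns
  calc (A * B) * (A * B) = A * (B * A) * B := by noncomm_ring
    _ = -((A * A) * (B * B)) := by rw [hanti]; noncomm_ring
    _ = (-(lA ^ 2 * lB ^ 2)) • 1 := by
      rw [hA, hB, smul_mul_smul_comm, one_mul, neg_smul]

/-- Matrix content of Proposition 3.2: if `A*A = λ_A² • 1`, `B*B = λ_B² • 1`,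
neither `A`, `B` nor `A*B` is a scalar matrix, and `A*B = c • (B*A)` for some `c`,
then `(A*B)*(A*B) = -(λ_A² * λ_B²) • 1`. -/
theorem long_automorphisms_product_square
    {k : Type*} [Field k] (hchar : ringChar k ≠ 2)
    (A B : Matrix (Fin 2) (Fin 2) k) (lA lB : k)
    (hlA : lA ≠ 0) (hlB : lB ≠ 0)
    (hA : A * A = (lA ^ 2) • (1 : Matrix (Fin 2) (Fin 2) k))
    (hB : B * B = (lB ^ 2) • (1 : Matrix (Fin 2) (Fin 2) k))
    (hAns : ¬ ∃ c : k, A = c • (1 : Matrix (Fin 2) (Fin 2) k))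
    (hBns : ¬ ∃ c : k, B = c • (1 : Matrix (Fin 2) (Fin 2) k))
    (hABns : ¬ ∃ c : k, A * B = c • (1 : Matrix (Fin 2) (Fin 2) k))
    (hcomm : ∃ c : k, A * B = c • (B * A)) :
    (A * B) * (A * B) = (-(lA ^ 2 * lB ^ 2)) • (1 : Matrix (Fin 2) (Fin 2) k) :=
  long_automorphisms_product_square_general A B lA lB hA hB hAns hBns hABns hcomm
end

section
/- The following identities hold: b00 = (α2−β2)(α2−β3)(α3−β2)(α3−β3); b22² − 4·b40·b04 = (τ2 − ρ2)² = (α2α3 − β2β3)²; b20² − 4·b40·b00 = (β2−β3)²·(α2α3 − β2β3)²; b02² − 4·b04·b00 = (α2−α3)²·(α2α3 − β2β3)²; and b20²·b04 − b20·b22·b02 + b02²·b40 + b22²·b00 − 4·b40·b00·b04 = (α2α3 − β2β3)⁴. Moreover, if α2, α3, β2, β3 are pairwise distinct and all nonzero, then b40 ≠ 0, b04 ≠ 0 and b00 ≠ 0; and if in addition α2·α3 ≠ β2·β3, then b22² − 4b40b04, b20² − 4b40b00, b02² − 4b04b00 and b20²b04 − b20b22b02 + b02²b40 + b22²b00 −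 4b40b00b04 are all nonzero. -/
/-!
The coefficients of `f` are polynomials in the elementary symmetric functions `τ₁, τ₂` and
`ρ₁, ρ₂` of the roots of `Q₁` and `Q₂`, so every identity is one in `τ, ρ` followed by Vieta.
The constant term `b₀₀ = f(0,0)` is the resultant of `Q₁` and `Q₂`, i.e. `∏ (αᵢ - βⱼ)`.
As a conic in `(Y², Z², 1)`, `f` has discriminant
`b₂₀²b₀₄ - b₂₀b₂₂b₀₂ + b₀₂²b₄₀ + b₂₂²b₀₀ - 4b₄₀b₀₀b₀₄` (`-1/2` times the determinant of its
symmetric matrix), equal to `(τ₂ - ρ₂)⁴`, and its restrictions to the three coordinate lines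
have discriminants `(τ₂ - ρ₂)²` times `1`, `disc Q₂` and `disc Q₁`. Exchanging `Q₁` and `Q₂`
exchanges `Y` and `Z`, which reduces the last of these to the second. Under the genericity
assumptions every right-hand side is a product of nonzero factors.
-/

namespace ResultantQuartic

variable {R : Type*} [CommRing R] (τ1 τ2 ρ1 ρ2 : R)

def b40 : R := ρ2

def b22 : R := -(τ2 + ρ2)

def b04 : R := τ2

def b20 : R := 2 * τ1 * ρ2 - τ2 * ρ1 - ρ1 * ρ2

def b02 : R := -(τ1 * τ2) - τ1 * ρ2 + 2 * τ2 * ρ1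

def b00 : R := τ1 ^ 2 * ρ2 - τ1 * τ2 * ρ1 - τ1 * ρ1 * ρ2 + τ2 ^ 2
  + τ2 * ρ1 ^ 2 - 2 * τ2 * ρ2 + ρ2 ^ 2

theorem b02_swap : b02 τ1 τ2 ρ1 ρ2 = b20 ρ1 ρ2 τ1 τ2 := by
  unfold b02 b20; ring

theorem b00_swap : b00 τ1 τ2 ρ1 ρ2 = b00 ρ1 ρ2 τ1 τ2 := by
  unfold b00; ring

theorem b00_vieta (α2 α3 β2 β3 : R) :
    b00 (α2 + α3) (α2 * α3) (β2 + β3) (β2 * β3)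
      = (α2 - β2) * (α2 - β3) * (α3 - β2) * (α3 - β3) := by
  unfold b00; ring

theorem b22_discrim : b22 τ2 ρ2 ^ 2 - 4 * b40 ρ2 * b04 τ2 = (τ2 - ρ2) ^ 2 := by
  unfold b22 b40 b04; ring

theorem b20_discrim :
    b20 τ1 τ2 ρ1 ρ2 ^ 2 - 4 * b40 ρ2 * b00 τ1 τ2 ρ1 ρ2
      = (ρ1 ^ 2 - 4 * ρ2) * (τ2 - ρ2) ^ 2 := by
  unfold b20 b40 b00; ring

theorem b02_discrim :
    b02 τ1 τ2 ρ1 ρ2 ^ 2 - 4 * b04 τ2 * b00 τ1 τ2 ρ1 ρ2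
      = (τ1 ^ 2 - 4 * τ2) * (τ2 - ρ2) ^ 2 := by
  rw [b02_swap, b00_swap, sub_sq_comm τ2]
  exact b20_discrim ρ1 ρ2 τ1 τ2

theorem conic_discrim :
    b20 τ1 τ2 ρ1 ρ2 ^ 2 * b04 τ2 - b20 τ1 τ2 ρ1 ρ2 * b22 τ2 ρ2 * b02 τ1 τ2 ρ1 ρ2
      + b02 τ1 τ2 ρ1 ρ2 ^ 2 * b40 ρ2 + b22 τ2 ρ2 ^ 2 * b00 τ1 τ2 ρ1 ρ2
      - 4 * b40 ρ2 * b00 τ1 τ2 ρ1 ρ2 * b04 τ2 = (τ2 - ρ2) ^ 4 := by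
  unfold b20 b04 b22 b02 b40 b00; ring

end ResultantQuartic

open ResultantQuartic

/-- Lemma 4.5 of the paper: identities among the coefficients of the quartic `f`,
and their nonvanishing under the stated genericity conditions. -/
theorem quartic_coefficient_identities
    {k : Type*} [Field k]
    (α2 α3 β2 β3 τ1 τ2 ρ1 ρ2 b40 b22 b04 b20 b02 b00 : k)
    (hτ1 : τ1 = α2 + α3) (hτ2 : τ2 = α2 * α3)
    (hρ1 : ρ1 = β2 + β3) (hρ2 : ρ2 = β2 * β3)
    (hb40 : b40 = ρ2) (hb22 : b22 = -(τ2 + ρ2)) (hb04 : b04 = τ2)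
    (hb20 : b20 = 2 * τ1 * ρ2 - τ2 * ρ1 - ρ1 * ρ2)
    (hb02 : b02 = -(τ1 * τ2) - τ1 * ρ2 + 2 * τ2 * ρ1)
    (hb00 : b00 = τ1 ^ 2 * ρ2 - τ1 * τ2 * ρ1 - τ1 * ρ1 * ρ2 + τ2 ^ 2
        + τ2 * ρ1 ^ 2 - 2 * τ2 * ρ2 + ρ2 ^ 2) :
    b00 = (α2 - β2) * (α2 - β3) * (α3 - β2) * (α3 - β3)
    ∧ b22 ^ 2 - 4 * b40 * b04 = (τ2 - ρ2) ^ 2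
    ∧ (τ2 - ρ2) ^ 2 = (α2 * α3 - β2 * β3) ^ 2
    ∧ b20 ^ 2 - 4 * b40 * b00 = (β2 - β3) ^ 2 * (α2 * α3 - β2 * β3) ^ 2
    ∧ b02 ^ 2 - 4 * b04 * b00 = (α2 - α3) ^ 2 * (α2 * α3 - β2 * β3) ^ 2
    ∧ b20 ^ 2 * b04 - b20 * b22 * b02 + b02 ^ 2 * b40 + b22 ^ 2 * b00
        - 4 * b40 * b00 * b04 = (α2 * α3 - β2 * β3) ^ 4
    ∧ ((α2 ≠ α3 ∧ α2 ≠ β2 ∧ α2 ≠ β3 ∧ α3 ≠ β2 ∧ α3 ≠ β3 ∧ β2 ≠ β3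
        ∧ α2 ≠ 0 ∧ α3 ≠ 0 ∧ β2 ≠ 0 ∧ β3 ≠ 0) →
      (b40 ≠ 0 ∧ b04 ≠ 0 ∧ b00 ≠ 0
        ∧ (α2 * α3 ≠ β2 * β3 →
            b22 ^ 2 - 4 * b40 * b04 ≠ 0
            ∧ b20 ^ 2 - 4 * b40 * b00 ≠ 0
            ∧ b02 ^ 2 - 4 * b04 * b00 ≠ 0
            ∧ b20 ^ 2 * b04 - b20 * b22 * b02 + b02 ^ 2 * b40 + b22 ^ 2 * b00
                - 4 * b40 * b00 * b04 ≠ 0))) := by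
  replace hb40 : b40 = ResultantQuartic.b40 ρ2 := hb40
  replace hb22 : b22 = ResultantQuartic.b22 τ2 ρ2 := hb22
  replace hb04 : b04 = ResultantQuartic.b04 τ2 := hb04
  replace hb20 : b20 = ResultantQuartic.b20 τ1 τ2 ρ1 ρ2 := hb20
  replace hb02 : b02 = ResultantQuartic.b02 τ1 τ2 ρ1 ρ2 := hb02
  replace hb00 : b00 = ResultantQuartic.b00 τ1 τ2 ρ1 ρ2 := hb00
  subst b40 b22 b04 b20 b02 b00 τ1 τ2 ρ1 ρ2
  have vieta (a b : k) : (a + b) ^ 2 - 4 * (a * b) = (a - b) ^ 2 := by ring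
  have h22 := b22_discrim (α2 * α3) (β2 * β3)
  have h20 := b20_discrim (α2 + α3) (α2 * α3) (β2 + β3) (β2 * β3)
  have h02 := b02_discrim (α2 + α3) (α2 * α3) (β2 + β3) (β2 * β3)
  have hconic := conic_discrim (α2 + α3) (α2 * α3) (β2 + β3) (β2 * β3)
  rw [vieta] at h20 h02
  rw [b00_vieta] at h20 h02 hconic ⊢
  refine ⟨rfl, h22, rfl, h20, h02, hconic, ?_⟩
  rintro ⟨h23, h2b2, h2b3, h3b2, h3b3, hbb, ha2, ha3, hb2, hb3⟩
  refine ⟨mul_ne_zero hb2 hb3, mul_ne_zero ha2 ha3, ?_, fun hne => ?_⟩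
  · simp only [mul_ne_zero_iff, sub_ne_zero]
    exact ⟨⟨⟨h2b2, h2b3⟩, h3b2⟩, h3b3⟩
  · rw [h22, h20, h02, hconic]
    simp only [ne_eq, mul_eq_zero, pow_eq_zero_iff, sub_eq_zero, OfNat.ofNat_ne_zero,
      not_false_eq_true, not_or]
    exact ⟨hne, ⟨hbb, hne⟩, ⟨h23, hne⟩, hne⟩
end

section
/- Let x, y1, y2 ∈ k with x ≠ 0, y1² = x·(x−α2)·(x−α3) and y2² = x·(x−β2)·(x−β3). Then f(y1/x, y2/x) = 0. -/
/-- Point-level content of the rational map `Φ`: a point of the fiber product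
`E1 ×_{P¹} E2` with `x ≠ 0` maps to a point of the plane quartic `f = 0`. -/
theorem fiber_product_point_on_quartic
    {k : Type*} [Field k]
    (α2 α3 β2 β3 τ1 τ2 ρ1 ρ2 b40 b22 b04 b20 b02 b00 : k)
    (hτ1 : τ1 = α2 + α3) (hτ2 : τ2 = α2 * α3)
    (hρ1 : ρ1 = β2 + β3) (hρ2 : ρ2 = β2 * β3)
    (hb40 : b40 = ρ2) (hb22 : b22 = -(τ2 + ρ2)) (hb04 : b04 = τ2)
    (hb20 : b20 = 2 * τ1 * ρ2 - τ2 * ρ1 - ρ1 * ρ2)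
    (hb02 : b02 = -(τ1 * τ2) - τ1 * ρ2 + 2 * τ2 * ρ1)
    (hb00 : b00 = τ1 ^ 2 * ρ2 - τ1 * τ2 * ρ1 - τ1 * ρ1 * ρ2 + τ2 ^ 2
        + τ2 * ρ1 ^ 2 - 2 * τ2 * ρ2 + ρ2 ^ 2)
    (x y1 y2 : k) (hx : x ≠ 0)
    (hy1 : y1 ^ 2 = x * (x - α2) * (x - α3))
    (hy2 : y2 ^ 2 = x * (x - β2) * (x - β3)) :
    b40 * (y1 / x) ^ 4 + b22 * (y1 / x) ^ 2 * (y2 / x) ^ 2 + b04 * (y2 / x) ^ 4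
      + b20 * (y1 / x) ^ 2 + b02 * (y2 / x) ^ 2 + b00 = 0 := by
  subst hτ1 hτ2 hρ1 hρ2 hb40 hb22 hb04 hb20 hb02 hb00
  have hY : x * (y1 / x) ^ 2 = (x - α2) * (x - α3) := by
    field_simp
    linear_combination hy1
  have hZ : x * (y2 / x) ^ 2 = (x - β2) * (x - β3) := by
    field_simp
    linear_combination hy2
  have h4 : x ^ 4 ≠ 0 := pow_ne_zero _ hx
  apply mul_left_cancel₀ h4
  rw [mul_zero]
  linear_combination
    ((-(β2 * β3) * ((y2 / x) ^ 2 * x ^ 2) + β2 * β3 * ((y1 / x) ^ 2 * x ^ 2)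
        + β2 * β3 * x ^ 3 - β2 * β3 ^ 2 * x ^ 2 - β2 ^ 2 * β3 * x ^ 2
        + α3 * β2 * β3 * x ^ 2 + α2 * β2 * β3 * x ^ 2
        - α2 * α3 * ((y2 / x) ^ 2 * x ^ 2) - α2 * α3 * β3 * x ^ 2
        - α2 * α3 * β2 * x ^ 2 + α2 * α3 * β2 * β3 * x) * x) * hY
    + ((-(β2 * β3) * x ^ 3 + α2 * α3 * ((y2 / x) ^ 2 * x ^ 2)
        + α2 * α3 * β3 * x ^ 2 + α2 * α3 * β2 * x ^ 2
        - α2 ^ 2 * α3 ^ 2 * x) * x) * hZ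
end

section
/- Let Y, Z ∈ k satisfy f(Y,Z) = 0, and assume τ2 ≠ ρ2. Then (Y² + τ1) ≠ (Z² + ρ1), and the element x := (τ2 − ρ2)/((Y² + τ1) − (Z² + ρ1)) is nonzero and is a common root of the two quadratics: x² − (τ1 + Y²)·x + τ2 = 0 and x² − (ρ1 + Z²)·x + ρ2 = 0. -/
/-- Point-level content of the inverse rational map `Ψ`: a point of the quartic
`f = 0` with `τ2 ≠ ρ2` yields a common root `x` of the two quadratics. -/
theorem quartic_point_common_root
    {k : Type*} [Field k]
    (τ1 τ2 ρ1 ρ2 b40 b22 b04 b20 b02 b00 : k)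
    (hb40 : b40 = ρ2) (hb22 : b22 = -(τ2 + ρ2)) (hb04 : b04 = τ2)
    (hb20 : b20 = 2 * τ1 * ρ2 - τ2 * ρ1 - ρ1 * ρ2)
    (hb02 : b02 = -(τ1 * τ2) - τ1 * ρ2 + 2 * τ2 * ρ1)
    (hb00 : b00 = τ1 ^ 2 * ρ2 - τ1 * τ2 * ρ1 - τ1 * ρ1 * ρ2 + τ2 ^ 2
        + τ2 * ρ1 ^ 2 - 2 * τ2 * ρ2 + ρ2 ^ 2)
    (Y Z : k)
    (hf : b40 * Y ^ 4 + b22 * Y ^ 2 * Z ^ 2 + b04 * Z ^ 4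
        + b20 * Y ^ 2 + b02 * Z ^ 2 + b00 = 0)
    (hτρ : τ2 ≠ ρ2) :
    (Y ^ 2 + τ1) ≠ (Z ^ 2 + ρ1) ∧
    (τ2 - ρ2) / ((Y ^ 2 + τ1) - (Z ^ 2 + ρ1)) ≠ 0 ∧
    ((τ2 - ρ2) / ((Y ^ 2 + τ1) - (Z ^ 2 + ρ1))) ^ 2
        - (τ1 + Y ^ 2) * ((τ2 - ρ2) / ((Y ^ 2 + τ1) - (Z ^ 2 + ρ1))) + τ2 = 0 ∧
    ((τ2 - ρ2) / ((Y ^ 2 + τ1) - (Z ^ 2 + ρ1))) ^ 2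
        - (ρ1 + Z ^ 2) * ((τ2 - ρ2) / ((Y ^ 2 + τ1) - (Z ^ 2 + ρ1))) + ρ2 = 0 := by
  rw [hb40, hb22, hb04, hb20, hb02, hb00] at hf
  have hne : (Y ^ 2 + τ1) ≠ (Z ^ 2 + ρ1) := by
    intro h
    apply hτρ
    have h2 : (τ2 - ρ2) ^ 2 = 0 := by
      linear_combination hf - (τ2 * ((Y ^ 2 + τ1) - (Z ^ 2 + ρ1)) - (τ1 + Y ^ 2) * (τ2 - ρ2)) * h
    have h3 := pow_eq_zero_iff (n := 2) (by norm_num) |>.mp h2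
    exact sub_eq_zero.mp h3
  have hd : (Y ^ 2 + τ1) - (Z ^ 2 + ρ1) ≠ 0 := sub_ne_zero.mpr hne
  have htr : τ2 - ρ2 ≠ 0 := sub_ne_zero.mpr hτρ
  refine ⟨hne, div_ne_zero htr hd, ?_, ?_⟩
  · field_simp
    linear_combination hf
  · field_simp
    linear_combination hf
end

section
/- Assume char k ≠ 2, that α2, α3, β2, β3 are pairwise distinct and all nonzero, and that α2·α3 ≠ β2·β3. Then the quartic f, viewed as a polynomial in the two variables Y and Z over k, is irreducible in k[Y,Z]. -/
/-!
Write `f = A Y⁴ + B Y² + C` with `A = ρ₂ ∈ kˣ` and `B, C ∈ k[Z]`. Over a field, such a biquadratic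
is reducible only if `B² - 4AC` or `AC` is a square: a root `y` gives `B² - 4AC = (2Ay² + B)²`,
and a monic quadratic factor makes one of the two a square according as it is even or not.
Since `A` is a unit, Gauss's lemma lets us work over `k(Z)`, and as `k[Z]` is integrally closed a
square in `k(Z)` lying in `k[Z]` is a square there. Now `B² - 4AC` and `AC` are even quartics in
`Z`, and `a Z⁴ + b Z² + c` with `a ≠ 0` is a square only if `b² - 4ac = 0`; here these
discriminants are `16 ρ₂ (τ₂ - ρ₂)⁴` and `ρ₂² (α₂ - α₃)² (τ₂ - ρ₂)²`.
-/

theorem IsIntegrallyClosed.isSquare_of_isSquare_algebraMap {R K : Type*} [CommRing R] [IsDomain R]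
    [IsIntegrallyClosed R] [Field K] [Algebra R K] [IsFractionRing R K] {r : R}
    (h : IsSquare (algebraMap R K r)) : IsSquare r := by
  obtain ⟨s, hs⟩ := h
  obtain ⟨t, rfl⟩ := IsIntegrallyClosed.exists_algebraMap_eq_of_isIntegral_pow (R := R) two_pos
    (x := s) (by rw [sq, ← hs]; exact isIntegral_algebraMap)
  exact ⟨t, IsFractionRing.injective R K (by rw [hs, map_mul])⟩

namespace Polynomial

theorem isPrimitive_of_isUnit_coeff {R : Type*} [CommSemiring R] {p : R[X]} {n : ℕ}
    (hn : IsUnit (p.coeff n)) : p.IsPrimitive :=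
  fun r hr => isUnit_of_dvd_unit ((C_dvd_iff_dvd_coeff r p).mp hr n) hn

section CommRing

variable {R : Type*} [CommRing R] {a b c : R}

theorem coeff_eq_of_biquadratic_eq_mul {g h : R[X]} (hg : g.natDegree ≤ 2)
    (hh : h.natDegree ≤ 2) (H : C a * X ^ 4 + C b * X ^ 2 + C c = g * h) :
    a = g.coeff 2 * h.coeff 2 ∧
    0 = g.coeff 1 * h.coeff 2 + g.coeff 2 * h.coeff 1 ∧
    b = g.coeff 0 * h.coeff 2 + g.coeff 1 * h.coeff 1 + g.coeff 2 * h.coeff 0 ∧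
    0 = g.coeff 0 * h.coeff 1 + g.coeff 1 * h.coeff 0 ∧
    c = g.coeff 0 * h.coeff 0 := by
  have hg3 : g.coeff 3 = 0 := coeff_eq_zero_of_natDegree_lt (by omega)
  have hg4 : g.coeff 4 = 0 := coeff_eq_zero_of_natDegree_lt (by omega)
  have hh3 : h.coeff 3 = 0 := coeff_eq_zero_of_natDegree_lt (by omega)
  have hh4 : h.coeff 4 = 0 := coeff_eq_zero_of_natDegree_lt (by omega)
  have key (n : ℕ) : (C a * X ^ 4 + C b * X ^ 2 + C c).coeff n =
      ∑ i ∈ Finset.range (n + 1), g.coeff i * h.coeff (n - i) := by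
    rw [H, coeff_mul, Finset.Nat.sum_antidiagonal_eq_sum_range_succ_mk]
  refine ⟨?_, ?_, ?_, ?_, ?_⟩
  · simpa [Finset.sum_range_succ, coeff_X_pow, hg3, hg4, hh3, hh4] using key 4
  · simpa [Finset.sum_range_succ, coeff_X_pow, hg3, hh3] using key 3
  · simpa [Finset.sum_range_succ, coeff_X_pow, add_assoc] using key 2
  · simpa [Finset.sum_range_succ, coeff_X_pow] using key 1
  · simpa [coeff_X_pow] using key 0

theorem not_isSquare_biquadratic [IsDomain R] (h2 : (2 : R) ≠ 0) (ha : a ≠ 0)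
    (hd : discrim a b c ≠ 0) : ¬IsSquare (C a * X ^ 4 + C b * X ^ 2 + C c) := by
  rintro ⟨t, ht⟩
  have hdeg : (t * t).natDegree ≤ 4 := ht ▸ by compute_degree
  rw [← sq, natDegree_pow] at hdeg
  obtain ⟨e4, e3, e2, -, e0⟩ := coeff_eq_of_biquadratic_eq_mul (by omega) (by omega) ht
  have ht2 : t.coeff 2 ≠ 0 := fun h0 => ha (by rw [e4, h0, zero_mul])
  have ht1 : t.coeff 1 = 0 := by
    have : t.coeff 1 * (2 * t.coeff 2) = 0 := by linear_combination -e3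
    exact (mul_eq_zero.mp this).resolve_right (mul_ne_zero h2 ht2)
  apply hd
  rw [discrim, e4, e2, e0, ht1]
  ring

end CommRing

section Field

variable {K : Type*} [Field K] {a b c : K}

theorem isSquare_discrim_or_isSquare_mul_of_monic_quadratic_dvd_biquadratic {q : K[X]}
    (hq : q.Monic) (hq2 : q.natDegree = 2) (hdvd : q ∣ C a * X ^ 4 + C b * X ^ 2 + C c)
    (ha : a ≠ 0) : IsSquare (discrim a b c) ∨ IsSquare (a * c) := by
  obtain ⟨h, H⟩ := hdvd
  have hne : C a * X ^ 4 + C b * X ^ 2 + C c ≠ 0 := by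
    intro h0; apply ha; simpa using congrArg (coeff · 4) h0
  have hh : h.natDegree = 2 := by
    have := natDegree_mul hq.ne_zero (right_ne_zero_of_mul (H ▸ hne))
    rw [← H, hq2] at this
    have h4 : (C a * X ^ 4 + C b * X ^ 2 + C c).natDegree = 4 := by compute_degree!
    omega
  obtain ⟨e4, e3, e2, e1, e0⟩ := coeff_eq_of_biquadratic_eq_mul hq2.le hh.le H
  have hq_lead : q.coeff 2 = 1 := hq2 ▸ hq.coeff_natDegree
  rw [hq_lead, one_mul] at e4 e2
  rw [hq_lead] at e3
  by_cases hq1 : q.coeff 1 = 0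
  · left
    refine ⟨q.coeff 0 * h.coeff 2 - h.coeff 0, ?_⟩
    rw [hq1] at e3 e2
    rw [discrim, e4, e2, e0]
    ring
  · right
    refine ⟨q.coeff 0 * h.coeff 2, ?_⟩
    have hw0 : h.coeff 0 = q.coeff 0 * h.coeff 2 := by
      have : q.coeff 1 * (h.coeff 0 - q.coeff 0 * h.coeff 2) = 0 := by
        linear_combination q.coeff 0 * e3 - e1
      exact sub_eq_zero.mp ((mul_eq_zero.mp this).resolve_left hq1)
    rw [e4, e0, hw0]
    ring

theorem irreducible_biquadratic_of_not_isSquare (ha : a ≠ 0) (hd : ¬IsSquare (discrim a b c))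
    (hac : ¬IsSquare (a * c)) : Irreducible (C a * X ^ 4 + C b * X ^ 2 + C c) := by
  have h4 : (C a * X ^ 4 + C b * X ^ 2 + C c).natDegree = 4 := by compute_degree!
  have hne : C a * X ^ 4 + C b * X ^ 2 + C c ≠ 0 := fun h0 => by simp [h0] at h4
  have hnu : ¬IsUnit (C a * X ^ 4 + C b * X ^ 2 + C c) := fun hu => by
    simp [natDegree_eq_zero_of_isUnit hu] at h4
  rw [irreducible_iff_lt_natDegree_lt hne hnu, h4]
  intro q hq hdeg hdvd
  obtain hq1 | hq2 : q.natDegree = 1 ∨ q.natDegree = 2 := by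
    simp only [Nat.reduceDiv, Finset.mem_Ioc] at hdeg; omega
  · obtain ⟨z, hz⟩ :=
      exists_root_of_degree_eq_one ((degree_eq_iff_natDegree_eq hq.ne_zero).mpr hq1)
    have hz' := (hz.dvd hdvd).eq_zero
    simp only [eval_add, eval_mul, eval_C, eval_pow, eval_X] at hz'
    exact hd ⟨2 * a * z ^ 2 + b,
      (discrim_eq_sq_of_quadratic_eq_zero (x := z ^ 2) (by linear_combination hz')).trans (sq _)⟩
  · exact (isSquare_discrim_or_isSquare_mul_of_monic_quadratic_dvd_biquadratic
      hq hq2 hdvd ha).elim hd hac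

end Field

section IntegrallyClosed

variable {R : Type*} [CommRing R] [IsDomain R] [IsIntegrallyClosed R] {a b c : R}

theorem irreducible_biquadratic_of_isUnit_of_not_isSquare (ha : IsUnit a)
    (hd : ¬IsSquare (discrim a b c)) (hac : ¬IsSquare (a * c)) :
    Irreducible (C a * X ^ 4 + C b * X ^ 2 + C c) := by
  let φ := algebraMap R (FractionRing R)
  have hprim : (C a * X ^ 4 + C b * X ^ 2 + C c).IsPrimitive :=
    isPrimitive_of_isUnit_coeff (n := 4) (by simpa [coeff_X_pow, coeff_C] using ha)
  refine hprim.irreducible_of_irreducible_map_of_injective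
    (IsFractionRing.injective R (FractionRing R)) ?_
  simp only [Polynomial.map_add, Polynomial.map_mul, Polynomial.map_pow, map_C, map_X]
  refine irreducible_biquadratic_of_not_isSquare (by simpa using ha.ne_zero) ?_ ?_
  · rw [show discrim (φ a) (φ b) (φ c) = φ (discrim a b c) by
      simp only [discrim, map_sub, map_mul, map_pow, map_ofNat]]
    exact mt IsIntegrallyClosed.isSquare_of_isSquare_algebraMap hd
  · rw [← map_mul]
    exact mt IsIntegrallyClosed.isSquare_of_isSquare_algebraMap hac

end IntegrallyClosed

section Bivariate

variable {k : Type*} [Field k] {b40 b22 b04 b20 b02 b00 : k}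

theorem irreducible_bivariate_biquadratic (h2 : (2 : k) ≠ 0) (h40 : b40 ≠ 0) (h04 : b04 ≠ 0)
    (hY : discrim b40 b22 b04 ≠ 0) (hZ : discrim b04 b02 b00 ≠ 0)
    (hD : discrim (discrim b40 b22 b04) (2 * b22 * b20 - 4 * b40 * b02)
      (discrim b40 b20 b00) ≠ 0) :
    Irreducible (C (C b40) * X ^ 4 + C (C b22 * X ^ 2 + C b20) * X ^ 2
      + C (C b04 * X ^ 4 + C b02 * X ^ 2 + C b00) : k[X][X]) := by
  refine irreducible_biquadratic_of_isUnit_of_not_isSquare (isUnit_C.mpr h40.isUnit) ?_ ?_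
  · have : discrim (C b40) (C b22 * X ^ 2 + C b20) (C b04 * X ^ 4 + C b02 * X ^ 2 + C b00) =
        C (discrim b40 b22 b04) * X ^ 4 + C (2 * b22 * b20 - 4 * b40 * b02) * X ^ 2
          + C (discrim b40 b20 b00) := by
      simp only [discrim, map_sub, map_mul, map_pow, map_ofNat]
      ring
    rw [this]
    exact not_isSquare_biquadratic h2 hY hD
  · have : C b40 * (C b04 * X ^ 4 + C b02 * X ^ 2 + C b00) =
        C (b40 * b04) * X ^ 4 + C (b40 * b02) * X ^ 2 + C (b40 * b00) := by
      simp only [map_mul]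
      ring
    rw [this]
    refine not_isSquare_biquadratic h2 (mul_ne_zero h40 h04) ?_
    rw [show discrim (b40 * b04) (b40 * b02) (b40 * b00) = b40 ^ 2 * discrim b04 b02 b00 by
      simp only [discrim]; ring]
    exact mul_ne_zero (pow_ne_zero 2 h40) hZ

end Bivariate

end Polynomial

namespace MvPolynomial

open scoped Polynomial

variable (R : Type*) [CommSemiring R]

noncomputable def finTwoAlgEquiv : MvPolynomial (Fin 2) R ≃ₐ[R] R[X][X] :=
  (finSuccEquiv R 1).trans (Polynomial.mapAlgEquiv (uniqueAlgEquiv R (Fin 1)))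

variable {R}

@[simp]
theorem finTwoAlgEquiv_X_zero : finTwoAlgEquiv R (X 0) = Polynomial.X := by
  simp [finTwoAlgEquiv, AlgEquiv.trans_apply, finSuccEquiv_X_zero]

@[simp]
theorem finTwoAlgEquiv_X_one : finTwoAlgEquiv R (X 1) = Polynomial.C Polynomial.X := by
  rw [← Fin.succ_zero_eq_one, finTwoAlgEquiv, AlgEquiv.trans_apply, finSuccEquiv_X_succ]
  simp

@[simp]
theorem finTwoAlgEquiv_C (r : R) : finTwoAlgEquiv R (C r) = Polynomial.C (Polynomial.C r) :=
  (finTwoAlgEquiv R).commutes r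

theorem finTwoAlgEquiv_biquadratic (b40 b22 b04 b20 b02 b00 : R) :
    finTwoAlgEquiv R (C b40 * X 0 ^ 4 + C b22 * X 0 ^ 2 * X 1 ^ 2 + C b04 * X 1 ^ 4
        + C b20 * X 0 ^ 2 + C b02 * X 1 ^ 2 + C b00) =
      Polynomial.C (Polynomial.C b40) * Polynomial.X ^ 4
        + Polynomial.C (Polynomial.C b22 * Polynomial.X ^ 2 + Polynomial.C b20) * Polynomial.X ^ 2
        + Polynomial.C (Polynomial.C b04 * Polynomial.X ^ 4 + Polynomial.C b02 * Polynomial.X ^ 2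
          + Polynomial.C b00) := by
  simp only [map_add, map_mul, map_pow, finTwoAlgEquiv_C, finTwoAlgEquiv_X_zero,
    finTwoAlgEquiv_X_one]
  ring

end MvPolynomial

open MvPolynomial

theorem quartic_irreducible_general
    {k : Type*} [Field k] (hchar : ringChar k ≠ 2)
    (α2 α3 β2 β3 τ1 τ2 ρ1 ρ2 b40 b22 b04 b20 b02 b00 : k)
    (hτ1 : τ1 = α2 + α3) (hτ2 : τ2 = α2 * α3)
    (hρ2 : ρ2 = β2 * β3)
    (hb40 : b40 = ρ2) (hb22 : b22 = -(τ2 + ρ2)) (hb04 : b04 = τ2)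
    (hb20 : b20 = 2 * τ1 * ρ2 - τ2 * ρ1 - ρ1 * ρ2)
    (hb02 : b02 = -(τ1 * τ2) - τ1 * ρ2 + 2 * τ2 * ρ1)
    (hb00 : b00 = τ1 ^ 2 * ρ2 - τ1 * τ2 * ρ1 - τ1 * ρ1 * ρ2 + τ2 ^ 2
        + τ2 * ρ1 ^ 2 - 2 * τ2 * ρ2 + ρ2 ^ 2)
    (hdist : α2 ≠ α3 ∧ α2 ≠ β2 ∧ α2 ≠ β3 ∧ α3 ≠ β2 ∧ α3 ≠ β3 ∧ β2 ≠ β3)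
    (hnz : α2 ≠ 0 ∧ α3 ≠ 0 ∧ β2 ≠ 0 ∧ β3 ≠ 0)
    (hnh : α2 * α3 ≠ β2 * β3) :
    Irreducible
      (C b40 * X 0 ^ 4 + C b22 * X 0 ^ 2 * X 1 ^ 2 + C b04 * X 1 ^ 4
        + C b20 * X 0 ^ 2 + C b02 * X 1 ^ 2 + C b00 : MvPolynomial (Fin 2) k) := by
  obtain ⟨hα, -, -, -, -, -⟩ := hdist
  obtain ⟨hα2, hα3, hβ2, hβ3⟩ := hnz
  have h2 : (2 : k) ≠ 0 := Ring.two_ne_zero hchar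
  have hnh' : α2 * α3 - β2 * β3 ≠ 0 := sub_ne_zero.mpr hnh
  subst b40 b22 b04 b20 b02 b00 τ1 τ2 ρ2
  rw [← MulEquiv.irreducible_iff (finTwoAlgEquiv k), finTwoAlgEquiv_biquadratic]
  refine Polynomial.irreducible_bivariate_biquadratic h2 (mul_ne_zero hβ2 hβ3)
    (mul_ne_zero hα2 hα3) ?_ ?_ ?_
  · exact ne_of_eq_of_ne (by rw [discrim]; ring) (pow_ne_zero 2 hnh')
  · exact ne_of_eq_of_ne (by rw [discrim]; ring)
      (mul_ne_zero (pow_ne_zero 2 (sub_ne_zero.mpr hα)) (pow_ne_zero 2 hnh'))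
  · exact ne_of_eq_of_ne (by simp only [discrim]; ring)
      (mul_ne_zero (mul_ne_zero (pow_ne_zero 4 h2) (mul_ne_zero hβ2 hβ3)) (pow_ne_zero 4 hnh'))

/-- Proposition 4.7 of the paper: the quartic `f` is (absolutely) irreducible
as a polynomial in the two variables `Y = X 0` and `Z = X 1` over the
algebraically closed field `k`. -/
theorem quartic_irreducible
    {k : Type*} [Field k] [IsAlgClosed k] (hchar : ringChar k ≠ 2)
    (α2 α3 β2 β3 τ1 τ2 ρ1 ρ2 b40 b22 b04 b20 b02 b00 : k)
    (hτ1 : τ1 = α2 + α3) (hτ2 : τ2 = α2 * α3)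
    (hρ1 : ρ1 = β2 + β3) (hρ2 : ρ2 = β2 * β3)
    (hb40 : b40 = ρ2) (hb22 : b22 = -(τ2 + ρ2)) (hb04 : b04 = τ2)
    (hb20 : b20 = 2 * τ1 * ρ2 - τ2 * ρ1 - ρ1 * ρ2)
    (hb02 : b02 = -(τ1 * τ2) - τ1 * ρ2 + 2 * τ2 * ρ1)
    (hb00 : b00 = τ1 ^ 2 * ρ2 - τ1 * τ2 * ρ1 - τ1 * ρ1 * ρ2 + τ2 ^ 2
        + τ2 * ρ1 ^ 2 - 2 * τ2 * ρ2 + ρ2 ^ 2)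
    (hdist : α2 ≠ α3 ∧ α2 ≠ β2 ∧ α2 ≠ β3 ∧ α3 ≠ β2 ∧ α3 ≠ β3 ∧ β2 ≠ β3)
    (hnz : α2 ≠ 0 ∧ α3 ≠ 0 ∧ β2 ≠ 0 ∧ β3 ≠ 0)
    (hnh : α2 * α3 ≠ β2 * β3) :
    Irreducible
      (C b40 * X 0 ^ 4 + C b22 * X 0 ^ 2 * X 1 ^ 2 + C b04 * X 1 ^ 4
        + C b20 * X 0 ^ 2 + C b02 * X 1 ^ 2 + C b00 : MvPolynomial (Fin 2) k) :=
  quartic_irreducible_general hchar α2 α3 β2 β3 τ1 τ2 ρ1 ρ2 b40 b22 b04 b20 b02 b00 hτ1 hτ2 hρ2 hb40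
    hb22 hb04 hb20 hb02 hb00 hdist hnz hnh
end

section
/- Assume char k ≠ 2, that α2, α3, β2, β3 are pairwise distinct and all nonzero, and that α2·α3 ≠ β2·β3. Then the affine plane curve f(Y,Z) = 0 is smooth: for every (Y,Z) ∈ k² with f(Y,Z) = 0, the two partial derivatives ∂f/∂Y = 2Y·(2b40·Y² + b22·Z² + b20) and ∂f/∂Z = 2Z·(2b04·Z² + b22·Y² + b02) are not both zero at (Y,Z). -/
/-!
With `u = Y²` and `v = Z²` the quartic is `f(Y, Z) = F(Y², Z²)` for the conic
`F(u, v) = b40 u² + b22 uv + b04 v² + b20 u + b02 v + b00`, and the partial derivatives of `f`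
are `2Y ∂F/∂u` and `2Z ∂F/∂v`. So at a singular point of `f`, according to which of `Y`, `Z`
vanish, either `b00 = F(0, 0)` vanishes, or `F(0, ·)` or `F(·, 0)` has a double root, or the conic
`F` itself is singular and its symmetric matrix is degenerate. These four invariants are the
resultant `∏ (αᵢ - βⱼ)` of `Q1` and `Q2`, the discriminants `(α2 - α3)² (τ2 - ρ2)²` and
`(β2 - β3)² (τ2 - ρ2)²`, and the determinant `-2 (τ2 - ρ2)⁴`; none of them vanishes.
-/

section Conic

variable {R : Type*} [CommRing R]

theorem discrim_eq_zero_of_double_root {a b c x : R} (h : a * (x * x) + b * x + c = 0)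
    (h' : 2 * a * x + b = 0) : discrim a b c = 0 := by
  rw [discrim_eq_sq_of_quadratic_eq_zero h, h', zero_pow two_ne_zero]

/-- Twice the symmetric matrix of the conic `a u² + b uv + c v² + d u + e v + g`. -/
def conicMatrix (a b c d e g : R) : Matrix (Fin 3) (Fin 3) R :=
  !![2 * a, b, d; b, 2 * c, e; d, e, 2 * g]

variable [IsDomain R]

theorem det_conicMatrix_eq_zero_of_singular {a b c d e g u v : R}
    (hF : a * u ^ 2 + b * u * v + c * v ^ 2 + d * u + e * v + g = 0)
    (hu : 2 * a * u + b * v + d = 0) (hv : 2 * c * v + b * u + e = 0) :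
    (conicMatrix a b c d e g).det = 0 := by
  refine Matrix.exists_mulVec_eq_zero_iff.1 ⟨![u, v, 1], by simp, ?_⟩
  ext i
  fin_cases i <;>
    simp only [conicMatrix, Matrix.mulVec, dotProduct, Fin.sum_univ_three, Fin.zero_eta, Fin.mk_one,
      Fin.reduceFinMk, Matrix.of_apply, Matrix.cons_val', Matrix.cons_val_fin_one,
      Matrix.cons_val_zero, Matrix.cons_val_one, Matrix.cons_val, Pi.zero_apply]
  · linear_combination hu
  · linear_combination hv
  -- Euler's identity: `d u + e v + 2 g = 2 F - u ∂F/∂u - v ∂F/∂v`.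
  · linear_combination 2 * hF - u * hu - v * hv

theorem biquadratic_singular_point_degenerate {a b c d e g Y Z : R} (h2 : (2 : R) ≠ 0)
    (hf : a * Y ^ 4 + b * Y ^ 2 * Z ^ 2 + c * Z ^ 4 + d * Y ^ 2 + e * Z ^ 2 + g = 0)
    (hsing : 2 * Y * (2 * a * Y ^ 2 + b * Z ^ 2 + d) = 0
      ∧ 2 * Z * (2 * c * Z ^ 2 + b * Y ^ 2 + e) = 0) :
    g = 0 ∨ discrim c e g = 0 ∨ discrim a d g = 0 ∨ (conicMatrix a b c d e g).det = 0 := by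
  obtain ⟨hY, hZ⟩ := hsing
  simp only [mul_eq_zero, h2, false_or] at hY hZ
  rcases hY with rfl | hY <;> rcases hZ with rfl | hZ
  · left
    simpa using hf
  · right; left
    exact discrim_eq_zero_of_double_root (x := Z ^ 2) (by linear_combination hf)
      (by linear_combination hZ)
  · right; right; left
    exact discrim_eq_zero_of_double_root (x := Y ^ 2) (by linear_combination hf)
      (by linear_combination hY)
  · right; right; right
    exact det_conicMatrix_eq_zero_of_singular (u := Y ^ 2) (v := Z ^ 2) (by linear_combination hf)
      (by linear_combination hY) (by linear_combination hZ)

end Conic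

theorem quartic_affine_smooth_general
    {k : Type*} [Field k] (hchar : ringChar k ≠ 2)
    (α2 α3 β2 β3 τ1 τ2 ρ1 ρ2 b40 b22 b04 b20 b02 b00 : k)
    (hτ1 : τ1 = α2 + α3) (hτ2 : τ2 = α2 * α3)
    (hρ1 : ρ1 = β2 + β3) (hρ2 : ρ2 = β2 * β3)
    (hb40 : b40 = ρ2) (hb22 : b22 = -(τ2 + ρ2)) (hb04 : b04 = τ2)
    (hb20 : b20 = 2 * τ1 * ρ2 - τ2 * ρ1 - ρ1 * ρ2)
    (hb02 : b02 = -(τ1 * τ2) - τ1 * ρ2 + 2 * τ2 * ρ1)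
    (hb00 : b00 = τ1 ^ 2 * ρ2 - τ1 * τ2 * ρ1 - τ1 * ρ1 * ρ2 + τ2 ^ 2
        + τ2 * ρ1 ^ 2 - 2 * τ2 * ρ2 + ρ2 ^ 2)
    (hdist : α2 ≠ α3 ∧ α2 ≠ β2 ∧ α2 ≠ β3 ∧ α3 ≠ β2 ∧ α3 ≠ β3 ∧ β2 ≠ β3)
    (hnh : α2 * α3 ≠ β2 * β3) :
    ∀ Y Z : k,
      b40 * Y ^ 4 + b22 * Y ^ 2 * Z ^ 2 + b04 * Z ^ 4
          + b20 * Y ^ 2 + b02 * Z ^ 2 + b00 = 0 →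
      ¬ (2 * Y * (2 * b40 * Y ^ 2 + b22 * Z ^ 2 + b20) = 0
          ∧ 2 * Z * (2 * b04 * Z ^ 2 + b22 * Y ^ 2 + b02) = 0) := by
  intro Y Z hf hsing
  have hres : b00 = (α2 - β2) * (α2 - β3) * (α3 - β2) * (α3 - β3) := by subst_vars; ring
  have hdiscZ : discrim b04 b02 b00 = ((α2 - α3) * (τ2 - ρ2)) ^ 2 := by
    subst_vars; rw [discrim]; ring
  have hdiscY : discrim b40 b20 b00 = ((β2 - β3) * (τ2 - ρ2)) ^ 2 := by
    subst_vars; rw [discrim]; ring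
  have hdet : (conicMatrix b40 b22 b04 b20 b02 b00).det = -2 * (τ2 - ρ2) ^ 4 := by
    subst_vars
    simp only [conicMatrix, Matrix.det_fin_three, Matrix.of_apply, Matrix.cons_val', Matrix.cons_val_zero,
      Matrix.cons_val_one, Matrix.cons_val, Matrix.cons_val_fin_one]
    ring
  have h2 : (2 : k) ≠ 0 := Ring.two_ne_zero hchar
  have hτρ : τ2 - ρ2 ≠ 0 := by rw [hτ2, hρ2]; exact sub_ne_zero.2 hnh
  obtain ⟨hα, h22, h23, h32, h33, hβ⟩ := hdist
  rcases biquadratic_singular_point_degenerate h2 hf hsing with h | h | h | h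
  · refine mul_ne_zero (mul_ne_zero (mul_ne_zero ?_ ?_) ?_) ?_ (hres ▸ h) <;>
      exact sub_ne_zero.2 ‹_›
  · exact pow_ne_zero 2 (mul_ne_zero (sub_ne_zero.2 hα) hτρ) (hdiscZ ▸ h)
  · exact pow_ne_zero 2 (mul_ne_zero (sub_ne_zero.2 hβ) hτρ) (hdiscY ▸ h)
  · exact mul_ne_zero (neg_ne_zero.2 h2) (pow_ne_zero 4 hτρ) (hdet ▸ h)

/-- Affine smoothness part of Theorem 4.6: at every point of the affine quartic
`f(Y,Z) = 0` the two partial derivatives do not vanish simultaneously. -/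
theorem quartic_affine_smooth
    {k : Type*} [Field k] (hchar : ringChar k ≠ 2)
    (α2 α3 β2 β3 τ1 τ2 ρ1 ρ2 b40 b22 b04 b20 b02 b00 : k)
    (hτ1 : τ1 = α2 + α3) (hτ2 : τ2 = α2 * α3)
    (hρ1 : ρ1 = β2 + β3) (hρ2 : ρ2 = β2 * β3)
    (hb40 : b40 = ρ2) (hb22 : b22 = -(τ2 + ρ2)) (hb04 : b04 = τ2)
    (hb20 : b20 = 2 * τ1 * ρ2 - τ2 * ρ1 - ρ1 * ρ2)
    (hb02 : b02 = -(τ1 * τ2) - τ1 * ρ2 + 2 * τ2 * ρ1)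
    (hb00 : b00 = τ1 ^ 2 * ρ2 - τ1 * τ2 * ρ1 - τ1 * ρ1 * ρ2 + τ2 ^ 2
        + τ2 * ρ1 ^ 2 - 2 * τ2 * ρ2 + ρ2 ^ 2)
    (hdist : α2 ≠ α3 ∧ α2 ≠ β2 ∧ α2 ≠ β3 ∧ α3 ≠ β2 ∧ α3 ≠ β3 ∧ β2 ≠ β3)
    (hnz : α2 ≠ 0 ∧ α3 ≠ 0 ∧ β2 ≠ 0 ∧ β3 ≠ 0)
    (hnh : α2 * α3 ≠ β2 * β3) :
    ∀ Y Z : k,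
      b40 * Y ^ 4 + b22 * Y ^ 2 * Z ^ 2 + b04 * Z ^ 4
          + b20 * Y ^ 2 + b02 * Z ^ 2 + b00 = 0 →
      ¬ (2 * Y * (2 * b40 * Y ^ 2 + b22 * Z ^ 2 + b20) = 0
          ∧ 2 * Z * (2 * b04 * Z ^ 2 + b22 * Y ^ 2 + b02) = 0) :=
  quartic_affine_smooth_general hchar α2 α3 β2 β3 τ1 τ2 ρ1 ρ2 b40 b22 b04 b20 b02 b00 hτ1 hτ2 hρ1
    hρ2 hb40 hb22 hb04 hb20 hb02 hb00 hdist hnh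
end

section
/- If f has a factor of total degree 1 in k[Y,Z], then b22² − 4·b40·b04 = 0, b20² − 4·b40·b00 = 0, and b22·b20 + 2·b40·b02 = 0. -/
/-!
Write the linear factor as `L = a₁ Y + a₂ Z + a₀`. Then `f` vanishes on the line `L = 0`. If
`a₁ = 0` the line is `Z = c`, and `f(Y, c)` would vanish identically although its `Y⁴`-coefficient
is `b40 ≠ 0`. Otherwise the line is `Y = t + s Z`, and `f(t + s Z, Z) = 0` gives five coefficient
identities. Since `b04, b00 ≠ 0` we get `s, t ≠ 0`, so the `Z³`- and `Z`-coefficients yield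
`b22 = -2 b40 s²` and `b20 = -2 b40 t²`; the remaining identities turn into the three relations.
-/

open MvPolynomial

open scoped Polynomial

theorem MvPolynomial.eq_C_add_sum_C_mul_X_of_totalDegree_le_one {σ R : Type*} [CommSemiring R]
    [Fintype σ] {p : MvPolynomial σ R} (hp : p.totalDegree ≤ 1) :
    p = C (p.coeff 0) + ∑ i, C (p.coeff (Finsupp.single i 1)) * X i := by
  classical
  ext d
  simp only [coeff_add, coeff_C, coeff_sum, coeff_C_mul, coeff_X]
  obtain h0 | h1 | h2 : d.degree = 0 ∨ d.degree = 1 ∨ 1 < d.degree := by omega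
  · obtain rfl := (Finsupp.degree_eq_zero_iff d).mp h0
    simp
  · obtain ⟨i, rfl⟩ := (Finsupp.sum_eq_one_iff _).mp h1
    simp [Finsupp.single_left_inj, eq_comm (a := (0 : σ →₀ ℕ))]
  · have hd0 : d ≠ 0 := by rintro rfl; simp at h2
    have hd1 (i : σ) : Finsupp.single i 1 ≠ d := by rintro rfl; simp at h2
    rw [coeff_eq_zero_of_totalDegree_lt (hp.trans_lt h2)]
    simp [Ne.symm hd0, hd1]

theorem Polynomial.coeffs_eq_zero_of_quartic_eq_zero {R : Type*} [Semiring R]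
    {c₀ c₁ c₂ c₃ c₄ : R}
    (h : C c₀ + C c₁ * X + C c₂ * X ^ 2 + C c₃ * X ^ 3 + C c₄ * X ^ 4 = 0) :
    c₀ = 0 ∧ c₁ = 0 ∧ c₂ = 0 ∧ c₃ = 0 ∧ c₄ = 0 := by
  have hcoeff (n : ℕ) := congrArg (coeff · n) h
  simp only [coeff_add, coeff_C_mul, coeff_X_pow, coeff_X, coeff_C, coeff_zero] at hcoeff
  exact ⟨by simpa using hcoeff 0, by simpa using hcoeff 1, by simpa using hcoeff 2,
    by simpa using hcoeff 3, by simpa using hcoeff 4⟩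

section EvenQuartic

variable {k : Type*} [CommRing k] (b40 b22 b04 b20 b02 b00 : k)

noncomputable def evenQuartic : MvPolynomial (Fin 2) k :=
  C b40 * X 0 ^ 4 + C b22 * X 0 ^ 2 * X 1 ^ 2 + C b20 * X 0 ^ 2
    + C b04 * X 1 ^ 4 + C b02 * X 1 ^ 2 + C b00

theorem aeval_line_evenQuartic (s t : k) :
    aeval ![Polynomial.C t + Polynomial.C s * Polynomial.X, Polynomial.X]
        (evenQuartic b40 b22 b04 b20 b02 b00)
      = Polynomial.C (b40 * t ^ 4 + b20 * t ^ 2 + b00)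
        + Polynomial.C (4 * b40 * s * t ^ 3 + 2 * b20 * s * t) * Polynomial.X
        + Polynomial.C (6 * b40 * s ^ 2 * t ^ 2 + b22 * t ^ 2 + b20 * s ^ 2 + b02)
          * Polynomial.X ^ 2
        + Polynomial.C (4 * b40 * s ^ 3 * t + 2 * b22 * s * t) * Polynomial.X ^ 3
        + Polynomial.C (b40 * s ^ 4 + b22 * s ^ 2 + b04) * Polynomial.X ^ 4 := by
  simp only [evenQuartic, map_add, map_mul, map_pow, aeval_X, aeval_C, Polynomial.algebraMap_eq,
    Matrix.cons_val_zero, Matrix.cons_val_one, Polynomial.C_ofNat]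
  ring

-- The zero coefficients are kept so that `Polynomial.coeffs_eq_zero_of_quartic_eq_zero` applies.
theorem aeval_horizontal_evenQuartic (c : k) :
    aeval ![Polynomial.X, Polynomial.C c] (evenQuartic b40 b22 b04 b20 b02 b00)
      = Polynomial.C (b04 * c ^ 4 + b02 * c ^ 2 + b00) + Polynomial.C 0 * Polynomial.X
        + Polynomial.C (b22 * c ^ 2 + b20) * Polynomial.X ^ 2
        + Polynomial.C 0 * Polynomial.X ^ 3 + Polynomial.C b40 * Polynomial.X ^ 4 := by
  simp only [evenQuartic, map_add, map_mul, map_pow, aeval_X, aeval_C, Polynomial.algebraMap_eq,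
    Matrix.cons_val_zero, Matrix.cons_val_one, Polynomial.C_0]
  ring

variable {b40 b22 b04 b20 b02 b00}

theorem eq_zero_of_aeval_horizontal_evenQuartic_eq_zero {c : k}
    (h : aeval ![Polynomial.X, Polynomial.C c] (evenQuartic b40 b22 b04 b20 b02 b00) = 0) :
    b40 = 0 := by
  rw [aeval_horizontal_evenQuartic] at h
  exact (Polynomial.coeffs_eq_zero_of_quartic_eq_zero h).2.2.2.2

theorem relations_of_aeval_line_evenQuartic_eq_zero [NoZeroDivisors k] (h2 : (2 : k) ≠ 0)
    (hb04 : b04 ≠ 0) (hb00 : b00 ≠ 0) {s t : k}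
    (h : aeval ![Polynomial.C t + Polynomial.C s * Polynomial.X, Polynomial.X]
      (evenQuartic b40 b22 b04 b20 b02 b00) = 0) :
    b22 ^ 2 - 4 * b40 * b04 = 0 ∧ b20 ^ 2 - 4 * b40 * b00 = 0
      ∧ b22 * b20 + 2 * b40 * b02 = 0 := by
  rw [aeval_line_evenQuartic] at h
  obtain ⟨hc0, hc1, hc2, hc3, hc4⟩ := Polynomial.coeffs_eq_zero_of_quartic_eq_zero h
  have hs : s ≠ 0 := by rintro rfl; exact hb04 (by simpa using hc4)
  have ht : t ≠ 0 := by rintro rfl; exact hb00 (by simpa using hc0)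
  have hst : 2 * s * t ≠ 0 := by simp [h2, hs, ht]
  have h22 : b22 + 2 * b40 * s ^ 2 = 0 := by
    refine (mul_eq_zero.mp ?_).resolve_left hst
    linear_combination hc3
  have h20 : b20 + 2 * b40 * t ^ 2 = 0 := by
    refine (mul_eq_zero.mp ?_).resolve_left hst
    linear_combination hc1
  refine ⟨?_, ?_, ?_⟩
  · linear_combination (b22 + 2 * b40 * s ^ 2) * h22 - 4 * b40 * hc4
  · linear_combination (b20 + 2 * b40 * t ^ 2) * h20 - 4 * b40 * hc0
  · linear_combination (b20 - 2 * b40 * t ^ 2) * h22 - 4 * b40 * s ^ 2 * h20 + 2 * b40 * hc2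

end EvenQuartic

/-- Lemma A.1 of the paper: if the quartic `f` (with `b40, b04, b00 ≠ 0`) has a
factor of total degree 1 in `k[Y,Z]`, then the stated coefficient relations hold. -/
theorem linear_factor_relations
    {k : Type*} [Field k] (hchar : ringChar k ≠ 2)
    (b40 b22 b04 b20 b02 b00 : k)
    (hb40 : b40 ≠ 0) (hb04 : b04 ≠ 0) (hb00 : b00 ≠ 0)
    (hfac : ∃ L g : MvPolynomial (Fin 2) k,
      (C b40 * X 0 ^ 4 + C b22 * X 0 ^ 2 * X 1 ^ 2 + C b20 * X 0 ^ 2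
        + C b04 * X 1 ^ 4 + C b02 * X 1 ^ 2 + C b00 : MvPolynomial (Fin 2) k)
        = L * g ∧ L.totalDegree = 1) :
    b22 ^ 2 - 4 * b40 * b04 = 0
    ∧ b20 ^ 2 - 4 * b40 * b00 = 0
    ∧ b22 * b20 + 2 * b40 * b02 = 0 := by
  obtain ⟨L, g, hf, hdeg⟩ := hfac
  have hL := eq_C_add_sum_C_mul_X_of_totalDegree_le_one hdeg.le
  rw [Fin.sum_univ_two] at hL
  set a₀ := L.coeff 0
  set a₁ := L.coeff (Finsupp.single 0 1)
  set a₂ := L.coeff (Finsupp.single 1 1)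
  have vanish (v : Fin 2 → k[X]) (hv : aeval v L = 0) :
      aeval v (evenQuartic b40 b22 b04 b20 b02 b00) = 0 := by
    rw [evenQuartic, hf, map_mul, hv, zero_mul]
  by_cases ha₁ : a₁ = 0
  · have ha₂ : a₂ ≠ 0 := by
      rintro ha₂
      rw [hL, ha₁, ha₂] at hdeg
      simp at hdeg
    refine absurd (eq_zero_of_aeval_horizontal_evenQuartic_eq_zero (c := -a₀ / a₂)
      (vanish _ ?_)) hb40
    rw [hL, ha₁]
    simp [← Polynomial.C_mul, mul_div_cancel₀ _ ha₂]
  · refine relations_of_aeval_line_evenQuartic_eq_zero (Ring.two_ne_zero hchar) hb04 hb00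
      (s := -a₂ / a₁) (t := -a₀ / a₁) (vanish _ ?_)
    rw [hL]
    simp [mul_add, ← mul_assoc, ← Polynomial.C_mul, mul_div_cancel₀ _ ha₁]
end

section
/- Let k be a field and λ, μ, ν ∈ k with μ ≠ 1 and μ·λ ≠ ν, and define λ' = (μλ−1)(μ−ν) / ((μλ−ν)(μ−1)). Then: (a) (1−λ')·(μλ−ν)·(μ−1) = μ·(1−λ)·(1−ν); and (b) λ·μ²·(1−λ') + (λ'·(ν+λ) − (1+λν))·μ + ν·(1−λ') = 0. In particular, if moreover μ ≠ 0, λ ≠ 1 and ν ≠ 1, then λ' ≠ 1 and μ is a root of the quadratic λ·X² + ((λ'(ν+λ) − (1+λν))/(1−λ'))·X + ν. -/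
/-- Equation (22) in the proof of Corollary 4.8: identities relating `μ` and the
Legendre parameter `λ'` of the third quotient genus-1 curve. -/
theorem mu_quadratic_relation
    {k : Type*} [Field k] (lam mu nu : k)
    (hmu : mu ≠ 1) (hmn : mu * lam ≠ nu)
    (lam' : k)
    (hlam' : lam' = (mu * lam - 1) * (mu - nu) / ((mu * lam - nu) * (mu - 1))) :
    (1 - lam') * (mu * lam - nu) * (mu - 1) = mu * (1 - lam) * (1 - nu)
    ∧ lam * mu ^ 2 * (1 - lam') + (lam' * (nu + lam) - (1 + lam * nu)) * mu
        + nu * (1 - lam') = 0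
    ∧ (mu ≠ 0 → lam ≠ 1 → nu ≠ 1 →
        lam' ≠ 1
        ∧ lam * mu ^ 2 + ((lam' * (nu + lam) - (1 + lam * nu)) / (1 - lam')) * mu
            + nu = 0) := by
  have h1 : mu * lam - nu ≠ 0 := sub_ne_zero.mpr hmn
  have h2 : mu - 1 ≠ 0 := sub_ne_zero.mpr hmu
  subst hlam'
  have ha : (1 - (mu * lam - 1) * (mu - nu) / ((mu * lam - nu) * (mu - 1))) *
      (mu * lam - nu) * (mu - 1) = mu * (1 - lam) * (1 - nu) := by
    field_simp
    ring
  have hb : lam * mu ^ 2 * (1 - (mu * lam - 1) * (mu - nu) / ((mu * lam - nu) * (mu - 1)))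
      + ((mu * lam - 1) * (mu - nu) / ((mu * lam - nu) * (mu - 1)) * (nu + lam)
        - (1 + lam * nu)) * mu
      + nu * (1 - (mu * lam - 1) * (mu - nu) / ((mu * lam - nu) * (mu - 1))) = 0 := by
    have e : (mu * lam - 1) * (mu - nu) / ((mu * lam - nu) * (mu - 1)) * ((mu * lam - nu) * (mu - 1)) = (mu * lam - 1) * (mu - nu) := div_mul_cancel₀ _ (mul_ne_zero h1 h2)
    have : (lam * mu ^ 2 * (1 - (mu * lam - 1) * (mu - nu) / ((mu * lam - nu) * (mu - 1)))
      + ((mu * lam - 1) * (mu - nu) / ((mu * lam - nu) * (mu - 1)) * (nu + lam)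
        - (1 + lam * nu)) * mu
      + nu * (1 - (mu * lam - 1) * (mu - nu) / ((mu * lam - nu) * (mu - 1)))) * ((mu * lam - nu) * (mu - 1)) = 0 := by
      linear_combination (-(lam * mu ^ 2) + (nu + lam) * mu - nu) * e
    exact (mul_eq_zero.mp this).resolve_right (mul_ne_zero h1 h2)
  refine ⟨ha, hb, fun hm0 hl1 hn1 => ?_⟩
  have hne : 1 - (mu * lam - 1) * (mu - nu) / ((mu * lam - nu) * (mu - 1)) ≠ 0 := by
    intro h
    rw [h] at ha
    simp only [zero_mul] at ha
    have : mu * (1 - lam) * (1 - nu) ≠ 0 := by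
      apply mul_ne_zero (mul_ne_zero hm0 _) _
      · exact sub_ne_zero.mpr (Ne.symm hl1)
      · exact sub_ne_zero.mpr (Ne.symm hn1)
    exact this ha.symm
  constructor
  · intro h
    exact hne (by rw [h]; ring)
  · set l' := (mu * lam - 1) * (mu - nu) / ((mu * lam - nu) * (mu - 1)) with hl'
    field_simp [hne]
    linear_combination hb
end

section
/- Let k be an algebraically closed field of characteristic p ≥ 3. For t ∈ k \ {0,1} write J(t) = 256·(t² − t + 1)³ / (t²·(t−1)²), and for admissible (ν, μ, λ) write λ' = (μλ−1)(μ−ν) / ((μλ−ν)(μ−1)). Then for any j1, j2, j3 ∈ k, the set of triples (ν, μ, λ) ∈ k³ with ν ∉ {0, 1}, μ ∉ {0, 1, ν}, λ ∉ {0, 1, μ⁻¹, ν·μ⁻¹}, such that the multiset {J(ν), J(λ), J(λ')} equals the multiset {j1, j2, j3}, is finite and has at most 2592 elements. -/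
/-!
A parameter `t ∉ {0, 1}` with `J(t) = j` is a root of the sextic
`256 (X² − X + 1)³ − j X² (X − 1)²`, which is nonzero as soon as `2 ≠ 0`; so each `j` has at most
six Legendre preimages. The multiset condition fixes `(J(ν), J(λ), J(λ'))` up to one of six
orderings of `(j1, j2, j3)`, leaving at most `6³` values of `(ν, λ, λ')` for each ordering.
Finally `(ν, λ, λ')` determines `μ` up to two choices: clearing denominators in the definition of
`λ'` gives a quadratic equation for `μ` with leading coefficient `λ (1 − λ')`.
Altogether there are at most `6 · 6³ · 2 = 2592` triples.
-/

/-- The `j`-invariant of the Legendre elliptic curve `y² = x(x−1)(x−t)`. -/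
noncomputable def legendreJ {k : Type*} [Field k] (t : k) : k :=
  256 * (t ^ 2 - t + 1) ^ 3 / (t ^ 2 * (t - 1) ^ 2)

/-- The Legendre parameter of the third quotient genus-1 curve
`E_{ν,μ,λ} : y² = (x−1)(x−ν)(x−μ)(x−μλ)`. -/
noncomputable def lamPrime {k : Type*} [Field k] (nu mu lam : k) : k :=
  (mu * lam - 1) * (mu - nu) / ((mu * lam - nu) * (mu - 1))

open Polynomial

lemma two_ne_zero_of_three_le_char {R : Type*} [AddMonoidWithOne R] (p : ℕ) [CharP R p]
    (hp : 3 ≤ p) : (2 : R) ≠ 0 := by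
  intro h
  have hdvd : p ∣ 2 := (CharP.cast_eq_zero_iff R p 2).mp (by exact_mod_cast h)
  have := Nat.le_of_dvd two_pos hdvd
  omega

section Orderings

variable {α : Type*}

def tripleOrderings (x y z : α) : List (α × α × α) :=
  [(x, y, z), (x, z, y), (y, x, z), (y, z, x), (z, x, y), (z, y, x)]

lemma mem_tripleOrderings_of_multiset_eq {a b c x y z : α}
    (h : ({a, b, c} : Multiset α) = {x, y, z}) : (a, b, c) ∈ tripleOrderings x y z := by
  have hperm : [a, b, c] ∈ [x, y, z].permutations :=
    List.mem_permutations.2 (Multiset.coe_eq_coe.1 h)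
  simpa [tripleOrderings, List.permutations, or_comm, or_left_comm] using hperm

end Orderings

lemma Polynomial.card_roots_toFinset_le_natDegree {R : Type*} [CommRing R] [IsDomain R]
    [DecidableEq R] (p : R[X]) : p.roots.toFinset.card ≤ p.natDegree :=
  (Multiset.toFinset_card_le _).trans p.card_roots'

section HoweCurve

variable {k : Type*} [Field k]

section Legendre

noncomputable def legendrePoly (j : k) : k[X] :=
  C 256 * (X ^ 2 - X + 1) ^ 3 - C j * (X ^ 2 * (X - 1) ^ 2)

lemma two_fifty_six_ne_zero (h2 : (2 : k) ≠ 0) : (256 : k) ≠ 0 := by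
  simpa [show (256 : k) = 2 ^ 8 by norm_num] using pow_ne_zero 8 h2

lemma legendrePoly_natDegree (h2 : (2 : k) ≠ 0) (j : k) : (legendrePoly j).natDegree = 6 := by
  have := two_fifty_six_ne_zero h2
  unfold legendrePoly
  compute_degree!

lemma legendrePoly_ne_zero (h2 : (2 : k) ≠ 0) (j : k) : legendrePoly j ≠ 0 :=
  ne_zero_of_natDegree_gt (n := 0) (by rw [legendrePoly_natDegree h2]; norm_num)

lemma legendrePoly_isRoot_of_legendreJ_eq {t j : k} (h0 : t ≠ 0) (h1 : t ≠ 1)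
    (hj : legendreJ t = j) : (legendrePoly j).IsRoot t := by
  have hden : t ^ 2 * (t - 1) ^ 2 ≠ 0 := by
    have := sub_ne_zero.2 h1
    positivity
  rw [legendreJ, div_eq_iff hden] at hj
  simp only [IsRoot, legendrePoly, eval_sub, eval_mul, eval_add, eval_pow, eval_C, eval_X,
    eval_one]
  linear_combination hj

lemma ne_zero_one_of_legendrePoly_isRoot (h2 : (2 : k) ≠ 0) {t j : k}
    (ht : (legendrePoly j).IsRoot t) : t ≠ 0 ∧ t ≠ 1 := by
  have h256 := two_fifty_six_ne_zero h2
  simp only [IsRoot, legendrePoly, eval_sub, eval_mul, eval_add, eval_pow, eval_C, eval_X,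
    eval_one] at ht
  constructor
  · rintro rfl
    exact h256 (by linear_combination ht)
  · rintro rfl
    exact h256 (by linear_combination ht)

variable [DecidableEq k]

noncomputable def legendreFiber (j : k) : Finset k :=
  (legendrePoly j).roots.toFinset

lemma card_legendreFiber_le (h2 : (2 : k) ≠ 0) (j : k) : (legendreFiber j).card ≤ 6 :=
  (legendrePoly j).card_roots_toFinset_le_natDegree.trans (legendrePoly_natDegree h2 j).le

lemma mem_legendreFiber_iff (h2 : (2 : k) ≠ 0) {t j : k} :
    t ∈ legendreFiber j ↔ (legendrePoly j).IsRoot t := by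
  rw [legendreFiber, Multiset.mem_toFinset, mem_roots (legendrePoly_ne_zero h2 j)]

end Legendre

section LamPrime

lemma lamPrime_ne_zero {nu mu lam : k} (hmu : mu ≠ nu) (hlam : mu * lam ≠ 1)
    (hden : (mu * lam - nu) * (mu - 1) ≠ 0) : lamPrime nu mu lam ≠ 0 :=
  div_ne_zero (mul_ne_zero (sub_ne_zero.2 hlam) (sub_ne_zero.2 hmu)) hden

/-- `λ' = 1` would force `μ (λ − 1) (ν − 1) = 0`. -/
lemma lamPrime_ne_one {nu mu lam : k} (hnu : nu ≠ 1) (hmu0 : mu ≠ 0)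
    (hden : (mu * lam - nu) * (mu - 1) ≠ 0) (hlam : lam ≠ 1) : lamPrime nu mu lam ≠ 1 := by
  rw [lamPrime, Ne, div_eq_one_iff_eq hden]
  intro h
  have : mu * (lam - 1) * (nu - 1) = 0 := by linear_combination -h
  simp_all [sub_eq_zero]

noncomputable def muPoly (nu lam c : k) : k[X] :=
  (X * C lam - 1) * (X - C nu) - C c * ((X * C lam - C nu) * (X - 1))

lemma muPoly_natDegree {nu lam c : k} (hlam : lam ≠ 0) (hc : c ≠ 1) :
    (muPoly nu lam c).natDegree = 2 := by
  unfold muPoly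
  compute_degree!
  rw [← one_sub_mul]
  exact mul_ne_zero (sub_ne_zero.2 hc.symm) hlam

lemma muPoly_isRoot {nu mu lam : k} (hden : (mu * lam - nu) * (mu - 1) ≠ 0) :
    (muPoly nu lam (lamPrime nu mu lam)).IsRoot mu := by
  have hrel := (div_eq_iff hden).mp (rfl : lamPrime nu mu lam = _).symm
  simp only [IsRoot, muPoly, eval_sub, eval_mul, eval_C, eval_X, eval_one]
  linear_combination hrel

variable [DecidableEq k]

noncomputable def muFiber (nu lam c : k) : Finset k :=
  (muPoly nu lam c).roots.toFinset

lemma card_muFiber_le {nu lam c : k} (hlam : lam ≠ 0) (hc : c ≠ 1) :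
    (muFiber nu lam c).card ≤ 2 :=
  (muPoly nu lam c).card_roots_toFinset_le_natDegree.trans (muPoly_natDegree hlam hc).le

lemma mem_muFiber {nu mu lam : k} (hlam : lam ≠ 0) (hden : (mu * lam - nu) * (mu - 1) ≠ 0)
    (hc : lamPrime nu mu lam ≠ 1) : mu ∈ muFiber nu lam (lamPrime nu mu lam) := by
  have hpoly : muPoly nu lam (lamPrime nu mu lam) ≠ 0 :=
    ne_zero_of_natDegree_gt (n := 0) (by rw [muPoly_natDegree hlam hc]; norm_num)
  rw [muFiber, Multiset.mem_toFinset, mem_roots hpoly]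
  exact muPoly_isRoot hden

end LamPrime

section HoweTriples

def howeTriples (j1 j2 j3 : k) : Set (k × k × k) :=
  {x : k × k × k |
    x.1 ∉ ({0, 1} : Set k)
    ∧ x.2.1 ∉ ({0, 1, x.1} : Set k)
    ∧ x.2.2 ∉ ({0, 1, x.2.1⁻¹, x.1 * x.2.1⁻¹} : Set k)
    ∧ ({legendreJ x.1, legendreJ x.2.2, legendreJ (lamPrime x.1 x.2.1 x.2.2)}
        : Multiset k) = ({j1, j2, j3} : Multiset k)}

variable [DecidableEq k]

noncomputable def howeCandidates (j1 j2 j3 : k) : Finset (k × k × k) :=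
  (tripleOrderings j1 j2 j3).toFinset.biUnion fun j =>
    (legendreFiber j.1 ×ˢ legendreFiber j.2.1 ×ˢ legendreFiber j.2.2).biUnion fun t =>
      (muFiber t.1 t.2.1 t.2.2).image fun mu => (t.1, mu, t.2.1)

lemma card_howeCandidates_le (h2 : (2 : k) ≠ 0) (j1 j2 j3 : k) :
    (howeCandidates j1 j2 j3).card ≤ 2592 := by
  refine (Finset.card_biUnion_le_card_mul _ _ (6 * 6 * 6 * 2) fun j _ => ?_).trans ?_
  · refine (Finset.card_biUnion_le_card_mul _ _ 2 fun t ht => ?_).trans ?_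
    · simp only [Finset.mem_product, mem_legendreFiber_iff h2] at ht
      exact Finset.card_image_le.trans <| card_muFiber_le
        (ne_zero_one_of_legendrePoly_isRoot h2 ht.2.1).1
        (ne_zero_one_of_legendrePoly_isRoot h2 ht.2.2).2
    · rw [Finset.card_product, Finset.card_product, ← mul_assoc]
      gcongr <;> exact card_legendreFiber_le h2 _
  · calc (tripleOrderings j1 j2 j3).toFinset.card * (6 * 6 * 6 * 2)
        ≤ 6 * (6 * 6 * 6 * 2) := by
          gcongr
          exact List.toFinset_card_le _
      _ = 2592 := by norm_num

lemma mem_howeCandidates (h2 : (2 : k) ≠ 0) {j1 j2 j3 nu mu lam : k}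
    (hnu : nu ≠ 0 ∧ nu ≠ 1) (hlam : lam ≠ 0 ∧ lam ≠ 1)
    (hc : lamPrime nu mu lam ≠ 0 ∧ lamPrime nu mu lam ≠ 1)
    (hden : (mu * lam - nu) * (mu - 1) ≠ 0)
    (hJ : (legendreJ nu, legendreJ lam, legendreJ (lamPrime nu mu lam))
      ∈ tripleOrderings j1 j2 j3) :
    (nu, mu, lam) ∈ howeCandidates j1 j2 j3 := by
  simp only [howeCandidates, Finset.mem_biUnion, Finset.mem_product, Finset.mem_image,
    List.mem_toFinset, mem_legendreFiber_iff h2]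
  exact ⟨_, hJ, (nu, lam, lamPrime nu mu lam),
    ⟨legendrePoly_isRoot_of_legendreJ_eq hnu.1 hnu.2 rfl,
      legendrePoly_isRoot_of_legendreJ_eq hlam.1 hlam.2 rfl,
      legendrePoly_isRoot_of_legendreJ_eq hc.1 hc.2 rfl⟩,
    mu, mem_muFiber hlam.1 hden hc.2, rfl⟩

lemma howeTriples_subset_howeCandidates (h2 : (2 : k) ≠ 0) (j1 j2 j3 : k) :
    howeTriples j1 j2 j3 ⊆ howeCandidates j1 j2 j3 := by
  rintro ⟨nu, mu, lam⟩ ⟨hnu, hmu, hlam, hJ⟩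
  simp only [Set.mem_insert_iff, Set.mem_singleton_iff, not_or] at hnu hmu hlam
  obtain ⟨hnu0, hnu1⟩ := hnu
  obtain ⟨hmu0, hmu1, hmunu⟩ := hmu
  obtain ⟨hlam0, hlam1, hlam_inv, hlam_div⟩ := hlam
  have hmulam1 : mu * lam ≠ 1 := fun h => hlam_inv (eq_inv_of_mul_eq_one_right h)
  have hmulamnu : mu * lam ≠ nu := fun h => hlam_div (by field_simp; linear_combination h)
  have hden : (mu * lam - nu) * (mu - 1) ≠ 0 :=
    mul_ne_zero (sub_ne_zero.2 hmulamnu) (sub_ne_zero.2 hmu1)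
  exact mem_howeCandidates h2 ⟨hnu0, hnu1⟩ ⟨hlam0, hlam1⟩
    ⟨lamPrime_ne_zero hmunu hmulam1 hden, lamPrime_ne_one hnu1 hmu0 hden hlam1⟩ hden
    (mem_tripleOrderings_of_multiset_eq hJ)

end HoweTriples

end HoweCurve

theorem howe_triples_with_given_j_invariants_finite_general
    {k : Type*} [Field k]
    (p : ℕ) [CharP k p] (hp : 3 ≤ p)
    (j1 j2 j3 : k) :
    ({x : k × k × k |
        x.1 ∉ ({0, 1} : Set k)
        ∧ x.2.1 ∉ ({0, 1, x.1} : Set k)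
        ∧ x.2.2 ∉ ({0, 1, x.2.1⁻¹, x.1 * x.2.1⁻¹} : Set k)
        ∧ ({legendreJ x.1, legendreJ x.2.2, legendreJ (lamPrime x.1 x.2.1 x.2.2)}
            : Multiset k) = ({j1, j2, j3} : Multiset k)} : Set (k × k × k)).Finite
    ∧ ({x : k × k × k |
        x.1 ∉ ({0, 1} : Set k)
        ∧ x.2.1 ∉ ({0, 1, x.1} : Set k)
        ∧ x.2.2 ∉ ({0, 1, x.2.1⁻¹, x.1 * x.2.1⁻¹} : Set k)
        ∧ ({legendreJ x.1, legendreJ x.2.2, legendreJ (lamPrime x.1 x.2.1 x.2.2)}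
            : Multiset k) = ({j1, j2, j3} : Multiset k)} : Set (k × k × k)).ncard
      ≤ 2592 := by
  classical
  change (howeTriples j1 j2 j3).Finite ∧ (howeTriples j1 j2 j3).ncard ≤ 2592
  have h2 : (2 : k) ≠ 0 := two_ne_zero_of_three_le_char p hp
  have hsub := howeTriples_subset_howeCandidates h2 j1 j2 j3
  refine ⟨(howeCandidates j1 j2 j3).finite_toSet.subset hsub, ?_⟩
  calc (howeTriples j1 j2 j3).ncard
      ≤ (howeCandidates j1 j2 j3 : Set (k × k × k)).ncard :=
        Set.ncard_le_ncard hsub (Finset.finite_toSet _)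
    _ = (howeCandidates j1 j2 j3).card := Set.ncard_coe_finset _
    _ ≤ 2592 := card_howeCandidates_le h2 j1 j2 j3

/-- Lemma 5.3 of the paper: at most 2592 admissible triples `(ν, μ, λ)` give the
three quotient genus-1 curves prescribed `j`-invariants `{j1, j2, j3}`
(as a multiset), a bound not depending on `p`. -/
theorem howe_triples_with_given_j_invariants_finite
    {k : Type*} [Field k] [IsAlgClosed k]
    (p : ℕ) [CharP k p] (hp : 3 ≤ p)
    (j1 j2 j3 : k) :
    ({x : k × k × k |
        x.1 ∉ ({0, 1} : Set k)
        ∧ x.2.1 ∉ ({0, 1, x.1} : Set k)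
        ∧ x.2.2 ∉ ({0, 1, x.2.1⁻¹, x.1 * x.2.1⁻¹} : Set k)
        ∧ ({legendreJ x.1, legendreJ x.2.2, legendreJ (lamPrime x.1 x.2.1 x.2.2)}
            : Multiset k) = ({j1, j2, j3} : Multiset k)} : Set (k × k × k)).Finite
    ∧ ({x : k × k × k |
        x.1 ∉ ({0, 1} : Set k)
        ∧ x.2.1 ∉ ({0, 1, x.1} : Set k)
        ∧ x.2.2 ∉ ({0, 1, x.2.1⁻¹, x.1 * x.2.1⁻¹} : Set k)
        ∧ ({legendreJ x.1, legendreJ x.2.2, legendreJ (lamPrime x.1 x.2.1 x.2.2)}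
            : Multiset k) = ({j1, j2, j3} : Multiset k)} : Set (k × k × k)).ncard
      ≤ 2592 :=
  howe_triples_with_given_j_invariants_finite_general p hp j1 j2 j3
end
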